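/- For any nonzero rational number α, the product of the real absolute value |α| with the p-adic norms |α|_p over all primes p equals 1 (the product formula). -/
import Mathlib

open Function

lemma padicNorm_nat_mulSupport_finite {n : ℕ} (hn : n ≠ 0) :
    (mulSupport fun p : Nat.Primes => (padicNorm p n : ℚ)).Finite := by
  apply Set.Finite.subset
    (Set.Finite.preimage Subtype.val_injective.injOn n.primeFactors.finite_toSet)
    (s := (Subtype.val : Nat.Primes → ℕ) ⁻¹' ↑n.primeFactors)
  intro p hp
  haveI : Fact p.1.Prime := ⟨p.2⟩
  simp only [Set.mem_preimage, Finset.mem_coe, Nat.mem_primeFactors]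
  refine ⟨p.2, ?_, hn⟩
  by_contra hdvd
  exact hp ((padicNorm.nat_eq_one_iff (p := p.1) n).2 hdvd)

lemma finprod_padicNorm_nat {n : ℕ} (hn : n ≠ 0) :
    ∏ᶠ p : Nat.Primes, (padicNorm p n : ℚ) = (n : ℚ)⁻¹ := by
  induction n using Nat.strong_induction_on with
  | _ n ih =>
    rcases eq_or_ne n 1 with rfl | hn1
    · simp [padicNorm.one]
    · obtain ⟨ℓ, hℓ, hdvd⟩ := Nat.exists_prime_and_dvd hn1
      obtain ⟨m, rfl⟩ := hdvd
      have hm : m ≠ 0 := by rintro rfl; simp at hn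
      have hmlt : m < ℓ * m :=
        lt_of_eq_of_lt (one_mul m).symm
          ((Nat.mul_lt_mul_right (Nat.pos_of_ne_zero hm)).2 hℓ.one_lt)
      have key : ∀ p : Nat.Primes, (padicNorm p ((ℓ * m : ℕ) : ℚ) : ℚ)
          = padicNorm p (ℓ : ℚ) * padicNorm p (m : ℚ) := by
        intro p
        haveI : Fact p.1.Prime := ⟨p.2⟩
        rw [Nat.cast_mul, padicNorm.mul]
      have hfin1 := padicNorm_nat_mulSupport_finite hℓ.ne_zero
      have hfin2 := padicNorm_nat_mulSupport_finite hm
      calc ∏ᶠ p : Nat.Primes, (padicNorm p ((ℓ * m : ℕ) : ℚ) : ℚ)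
          = ∏ᶠ p : Nat.Primes, padicNorm p (ℓ:ℚ) * padicNorm p (m:ℚ) :=
            finprod_congr key
        _ = (∏ᶠ p : Nat.Primes, padicNorm p (ℓ:ℚ))
            * ∏ᶠ p : Nat.Primes, padicNorm p (m:ℚ) :=
            finprod_mul_distrib hfin1 hfin2
        _ = (ℓ : ℚ)⁻¹ * (m : ℚ)⁻¹ := by
            rw [ih m hmlt hm]
            congr 1
            have h1 : ∀ p : Nat.Primes, p ≠ ⟨ℓ, hℓ⟩ → padicNorm p (ℓ:ℚ) = 1 := by
              intro p hp
              haveI : Fact p.1.Prime := ⟨p.2⟩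
              haveI : Fact ℓ.Prime := ⟨hℓ⟩
              exact padicNorm.padicNorm_of_prime_of_ne fun h => hp (Subtype.ext h)
            rw [finprod_eq_single _ ⟨ℓ, hℓ⟩ h1]
            haveI : Fact ℓ.Prime := ⟨hℓ⟩
            exact padicNorm.padicNorm_p_of_prime
        _ = ((ℓ * m : ℕ) : ℚ)⁻¹ := by push_cast; rw [mul_inv]

lemma padicNorm_eq_div (p : ℕ) [Fact p.Prime] (q : ℚ) :
    padicNorm p q = padicNorm p (q.num.natAbs : ℚ) / padicNorm p (q.den : ℚ) := by
  have h1 : (q.num.natAbs : ℚ) = |(q.num : ℚ)| := by rw [Nat.cast_natAbs, Int.cast_abs]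
  rcases abs_choice ((q.num : ℚ)) with h | h
  · rw [h1, h, ← padicNorm.div, Rat.num_div_den]
  · rw [h1, h, padicNorm.neg, ← padicNorm.div, Rat.num_div_den]

lemma finprod_padicNorm_rat {q : ℚ} (hq : q ≠ 0) :
    ∏ᶠ p : Nat.Primes, (padicNorm p q : ℚ) = |q|⁻¹ := by
  have hnum : q.num.natAbs ≠ 0 := by
    simp [Int.natAbs_ne_zero, Rat.num_ne_zero.2 hq]
  have h1 : (q.num.natAbs : ℚ) = |(q.num : ℚ)| := by rw [Nat.cast_natAbs, Int.cast_abs]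
  have habs : |q| = (q.num.natAbs : ℚ) / (q.den : ℚ) := by
    conv_lhs => rw [← Rat.num_div_den q]
    rw [abs_div, h1, abs_of_nonneg (by positivity : (0:ℚ) ≤ (q.den : ℚ))]
  calc ∏ᶠ p : Nat.Primes, (padicNorm p q : ℚ)
      = ∏ᶠ p : Nat.Primes,
          padicNorm p (q.num.natAbs : ℚ) / padicNorm p (q.den : ℚ) :=
        finprod_congr fun p =>
          haveI : Fact p.1.Prime := ⟨p.2⟩
          padicNorm_eq_div p q
    _ = (∏ᶠ p : Nat.Primes, padicNorm p (q.num.natAbs : ℚ))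
        / ∏ᶠ p : Nat.Primes, padicNorm p (q.den : ℚ) :=
        finprod_div_distrib (padicNorm_nat_mulSupport_finite hnum)
          (padicNorm_nat_mulSupport_finite q.den_nz)
    _ = (q.num.natAbs : ℚ)⁻¹ / (q.den : ℚ)⁻¹ := by
        rw [finprod_padicNorm_nat hnum, finprod_padicNorm_nat q.den_nz]
    _ = |q|⁻¹ := by rw [habs]; field_simp

theorem product_formula (α : ℚ) (hα : α ≠ 0) :
    |(α : ℝ)| * ∏ᶠ p : Nat.Primes, ((padicNorm p α : ℚ) : ℝ) = 1 := by
  have h : ∏ᶠ p : Nat.Primes, ((padicNorm p α : ℚ) : ℝ) = ((|α|⁻¹ : ℚ) : ℝ) := by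
    rw [← finprod_padicNorm_rat hα]
    exact ((Rat.castHom ℝ).toMonoidHom.map_finprod_of_injective
      Rat.cast_injective _).symm
  rw [h]
  push_cast
  rw [← abs_inv, ← abs_mul, mul_inv_cancel₀ (by exact_mod_cast hα), abs_one]
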